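/- arXiv:1106.1524 — 2 statements merged into one kernel-verified Lean document; each statement's English description precedes it below -/
import Mathlib

section
/- Let (Ω, R, P, J) be a NAP-space, let I be an index set of arbitrary cardinality, and let (A_j)_{j ∈ I} be a family of pairwise disjoint subsets of Ω with union A = ⋃_{j ∈ I} A_j. Then for every nonempty finite λ ⊆ Ω the family of real numbers (φ_{A_j}(λ))_{j ∈ I} has only finitely many nonzero members, and P(A) = J(σ), where σ is the element of 𝔉 defined by σ(λ) = ∑_{j ∈ I} φ_{A_j}(λ) (a finitely supported sum). -/
/-!
Each point of a finite `λ` lies in at most one `A j`, so only finitely many `A j` meet `λ`, and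
`φ_{A j}(λ) = 0` for the others since `P(∅) = 0`. Hence `(⋃ j, A j) ∩ λ` is a finite disjoint
union of the sets `A j ∩ λ`; finite additivity and division by `P(λ) > 0` give
`φ_{⋃ A j}(λ) = ∑ j, φ_{A j}(λ)` for every `λ`, and applying `J` yields the claim.
-/

abbrev FinP (Ω : Type*) := {l : Finset Ω // l.Nonempty}

open Function

def IsFinitelyAdditive {Ω M : Type*} [Add M] (P : Set Ω → M) : Prop :=
  ∀ A B : Set Ω, A ∩ B = ∅ → P (A ∪ B) = P A + P B

namespace IsFinitelyAdditive

variable {Ω M : Type*} {P : Set Ω → M}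

theorem empty [AddLeftCancelMonoid M] (hP : IsFinitelyAdditive P) : P ∅ = 0 := by
  have h := hP ∅ ∅ (Set.inter_self ∅)
  rwa [Set.union_self, left_eq_add] at h

theorem finset_biUnion [AddCancelCommMonoid M] (hP : IsFinitelyAdditive P) {I : Type*}
    {B : I → Set Ω} (s : Finset I) (hB : (s : Set I).PairwiseDisjoint B) :
    P (⋃ j ∈ s, B j) = ∑ j ∈ s, P (B j) := by
  classical
  induction s using Finset.induction_on with
  | empty => simpa using hP.empty
  | insert a s ha ih =>
    rw [Finset.coe_insert, Set.pairwiseDisjoint_insert_of_notMem (by exact_mod_cast ha)] at hB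
    rw [Finset.sum_insert ha, ← ih hB.1, Finset.set_biUnion_insert]
    refine hP _ _ (Set.disjoint_iff_inter_eq_empty.1 ?_)
    exact Set.disjoint_iUnion₂_right.2 fun j hj => hB.2 j hj

theorem iUnion_of_finite [AddCancelCommMonoid M] (hP : IsFinitelyAdditive P) {I : Type*}
    {B : I → Set Ω} (hB : Pairwise (Disjoint on B)) (hfin : {j | (B j).Nonempty}.Finite) :
    P (⋃ j, B j) = ∑ᶠ j, P (B j) := by
  have hunion : (⋃ j, B j) = ⋃ j ∈ hfin.toFinset, B j := by
    ext x
    simp only [Set.mem_iUnion, Set.Finite.mem_toFinset, Set.mem_ofPred_eq, exists_prop]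
    exact ⟨fun ⟨j, hx⟩ => ⟨j, ⟨x, hx⟩, hx⟩, fun ⟨j, _, hx⟩ => ⟨j, hx⟩⟩
  have hsupp : (support fun j => P (B j)) ⊆ hfin.toFinset := by
    intro j hj
    rw [Set.Finite.coe_toFinset, Set.mem_ofPred_eq, Set.nonempty_iff_ne_empty]
    intro hempty
    exact hj (by simp only [hempty, hP.empty])
  rw [hunion, hP.finset_biUnion _ (hB.set_pairwise _),
    finsum_eq_finsetSum_of_support_subset _ hsupp]

variable [AddCommMonoid M] [PartialOrder M] [IsOrderedAddMonoid M]

theorem mono (hP : IsFinitelyAdditive P) (h0 : ∀ A, 0 ≤ P A) : Monotone P := by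
  intro S T hST
  have h := hP S (T \ S) (Set.inter_sdiff_self _ _)
  rw [Set.union_sdiff_cancel hST] at h
  exact h ▸ le_add_of_nonneg_right (h0 _)

theorem pos_of_nonempty [One M] (hP : IsFinitelyAdditive P) (h0 : ∀ A, 0 ≤ P A)
    (h1 : ∀ A, P A = 1 ↔ A = Set.univ) {B : Set Ω} (hB : B.Nonempty) : 0 < P B := by
  obtain ⟨ω, hω⟩ := hB
  have hsingle : P {ω} ≠ 0 := by
    intro hzero
    have h := hP {ω} {ω}ᶜ (Set.inter_compl_self _)
    rw [Set.union_compl_self, (h1 _).2 rfl, hzero, zero_add, eq_comm, h1] at h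
    exact (Set.compl_ne_univ.2 (Set.singleton_nonempty ω)) h
  exact (h0 _).lt_of_ne' hsingle |>.trans_le (hP.mono h0 (Set.singleton_subset_iff.2 hω))

end IsFinitelyAdditive

theorem Set.Finite.setOf_inter_nonempty {Ω I : Type*} {A : I → Set Ω}
    (hA : Pairwise (Disjoint on A)) {s : Set Ω} (hs : s.Finite) :
    {j | (A j ∩ s).Nonempty}.Finite := by
  have hcover : {j | (A j ∩ s).Nonempty} = ⋃ x ∈ s, {j | x ∈ A j} := by
    ext j
    simp only [Set.mem_ofPred_eq, Set.mem_iUnion, exists_prop, Set.Nonempty, Set.mem_inter_iff]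
    exact ⟨fun ⟨x, hA, hs⟩ => ⟨x, hs, hA⟩, fun ⟨x, hs, hA⟩ => ⟨x, hA, hs⟩⟩
  rw [hcover]
  exact hs.biUnion fun x _ => (subsingleton_setOfPred_mem_iff_pairwise_disjoint.2 hA x).finite

section ConditionalProbability

variable {Ω I K R : Type*} [Field K] [Field R] [Algebra K R] {P : Set Ω → R} {L : Set Ω}
  {A : I → Set Ω} {φ : I → K}

theorem support_subset_setOf_inter_nonempty (hP : IsFinitelyAdditive P) (hL : P L ≠ 0)
    (hφ : ∀ j, algebraMap K R (φ j) * P L = P (A j ∩ L)) :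
    support φ ⊆ {j | (A j ∩ L).Nonempty} := by
  intro j hj
  rw [Set.mem_ofPred_eq, Set.nonempty_iff_ne_empty]
  intro hempty
  have h := hφ j
  rw [hempty, hP.empty, mul_eq_zero, map_eq_zero] at h
  exact h.elim hj hL

theorem eq_finsum_of_mul_eq_iUnion_inter (hP : IsFinitelyAdditive P) (hL : P L ≠ 0)
    (hA : Pairwise (Disjoint on A)) (hfin : {j | (A j ∩ L).Nonempty}.Finite)
    (hφ : ∀ j, algebraMap K R (φ j) * P L = P (A j ∩ L)) {ψ : K}
    (hψ : algebraMap K R ψ * P L = P ((⋃ j, A j) ∩ L)) :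
    ψ = ∑ᶠ j, φ j := by
  have hdisj : Pairwise (Disjoint on fun j => A j ∩ L) :=
    fun i j hij => (hA hij).mono Set.inter_subset_left Set.inter_subset_left
  have hφfin : (support φ).Finite := hfin.subset (support_subset_setOf_inter_nonempty hP hL hφ)
  apply (algebraMap K R).injective
  apply mul_right_cancel₀ hL
  rw [hψ, Set.iUnion_inter, hP.iUnion_of_finite hdisj hfin, map_finsum _ hφfin, finsum_mul]
  exact finsum_congr fun j => (hφ j).symm

end ConditionalProbability

theorem nap_infinite_additivity_general
    {Ω R : Type*} [Field R] [LinearOrder R] [IsStrictOrderedRing R] [Algebra ℝ R]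
    (P : Set Ω → R) (φ : Set Ω → FinP Ω → ℝ)
    (J : (FinP Ω → ℝ) →ₐ[ℝ] R)
    (nap1 : ∀ A : Set Ω, 0 ≤ P A)
    (nap2 : ∀ A : Set Ω, P A = 1 ↔ A = Set.univ)
    (nap3 : ∀ A B : Set Ω, A ∩ B = ∅ → P (A ∪ B) = P A + P B)
    (nap4a : ∀ (A : Set Ω) (l : FinP Ω),
      algebraMap ℝ R (φ A l) * P (l.1 : Set Ω) = P (A ∩ (l.1 : Set Ω)))
    (nap4b : ∀ A : Set Ω, P A = J (φ A))
    {I : Type*} (A : I → Set Ω)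
    (hdisj : ∀ i j : I, i ≠ j → A i ∩ A j = ∅) :
    (∀ l : FinP Ω, (Function.support fun j : I => φ (A j) l).Finite) ∧
    P (⋃ j : I, A j) = J (fun l : FinP Ω => ∑ᶠ j : I, φ (A j) l) := by
  have hA : Pairwise (Disjoint on A) :=
    fun i j hij => Set.disjoint_iff_inter_eq_empty.2 (hdisj i j hij)
  have hl (l : FinP Ω) : P (l.1 : Set Ω) ≠ 0 :=
    (IsFinitelyAdditive.pos_of_nonempty nap3 nap1 nap2 (Finset.coe_nonempty.2 l.2)).ne'
  have hfin (l : FinP Ω) : {j | (A j ∩ (l.1 : Set Ω)).Nonempty}.Finite :=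
    Set.Finite.setOf_inter_nonempty hA l.1.finite_toSet
  refine ⟨fun l => (hfin l).subset
    (support_subset_setOf_inter_nonempty nap3 (hl l) fun j => nap4a (A j) l), ?_⟩
  rw [nap4b]
  congr 1
  funext l
  exact eq_finsum_of_mul_eq_iUnion_inter nap3 (hl l) hA (hfin l) (fun j => nap4a (A j) l)
    (nap4a _ l)

/-- Infinite additivity in a NAP-space: for a pairwise disjoint family
`(A j)_{j ∈ I}` the family `(φ_{A j}(λ))_j` is finitely supported for every finite
`λ`, and `P(⋃ j, A j) = J(λ ↦ ∑_j φ_{A j}(λ))`. -/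
theorem nap_infinite_additivity
    {Ω R : Type*} [Nonempty Ω] [Field R] [LinearOrder R] [IsStrictOrderedRing R] [Algebra ℝ R]
    (P : Set Ω → R) (φ : Set Ω → FinP Ω → ℝ)
    (J : (FinP Ω → ℝ) →ₐ[ℝ] R)
    (nap1 : ∀ A : Set Ω, 0 ≤ P A)
    (nap2 : ∀ A : Set Ω, P A = 1 ↔ A = Set.univ)
    (nap3 : ∀ A B : Set Ω, A ∩ B = ∅ → P (A ∪ B) = P A + P B)
    (nap4a : ∀ (A : Set Ω) (l : FinP Ω),
      algebraMap ℝ R (φ A l) * P (l.1 : Set Ω) = P (A ∩ (l.1 : Set Ω)))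
    (nap4b : ∀ A : Set Ω, P A = J (φ A))
    {I : Type*} (A : I → Set Ω)
    (hdisj : ∀ i j : I, i ≠ j → A i ∩ A j = ∅) :
    (∀ l : FinP Ω, (Function.support fun j : I => φ (A j) l).Finite) ∧
    P (⋃ j : I, A j) = J (fun l : FinP Ω => ∑ᶠ j : I, φ (A j) l) :=
  nap_infinite_additivity_general P φ J nap1 nap2 nap3 nap4a nap4b A hdisj
end

section
/- Let (Ω, R, P, J) be a fair NAP-space, i.e. P({ω}) = P({τ}) for all ω, τ ∈ Ω. Then for all A, B ⊆ Ω with B nonempty, the conditional probability P(A|B) = P(A ∩ B)/P(B) is the J-image of a rational-valued function: there exists φ ∈ 𝔉 such that φ(λ) is a rational number for every nonempty finite λ ⊆ Ω and P(A ∩ B) = P(B) · J(φ). -/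
open Set

section Additive

variable {Ω R : Type*} {P : Set Ω → R}

theorem apply_empty_of_additive [AddCancelCommMonoid R]
    (hadd : ∀ A B : Set Ω, A ∩ B = ∅ → P (A ∪ B) = P A + P B) : P ∅ = 0 := by
  simpa using hadd ∅ ∅ (inter_self ∅)

theorem apply_finite_eq_ncard_nsmul [AddCancelCommMonoid R]
    (hadd : ∀ A B : Set Ω, A ∩ B = ∅ → P (A ∪ B) = P A + P B)
    (hfair : ∀ ω τ : Ω, P {ω} = P {τ}) {s : Set Ω} (hs : s.Finite) (ω : Ω) :
    P s = s.ncard • P {ω} := by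
  induction s, hs using Set.Finite.induction_on with
  | empty => simpa using apply_empty_of_additive hadd
  | @insert a s ha hs ih =>
    have hdisj : {a} ∩ s = ∅ := singleton_inter_eq_empty.mpr ha
    rw [insert_eq, hadd _ _ hdisj, ih, ← insert_eq, ncard_insert_of_notMem ha hs, hfair a ω,
      succ_nsmul']

theorem apply_singleton_ne_zero [AddCommMonoid R] [One R]
    (hadd : ∀ A B : Set Ω, A ∩ B = ∅ → P (A ∪ B) = P A + P B)
    (hnorm : ∀ A : Set Ω, P A = 1 ↔ A = univ) (ω : Ω) : P {ω} ≠ 0 := by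
  intro hω
  have hcompl : P {ω}ᶜ = 1 := by
    rw [← zero_add (P _), ← hω, ← hadd _ _ (inter_compl_self _), union_compl_self,
      (hnorm univ).mpr rfl]
  have : ω ∈ ({ω}ᶜ : Set Ω) := (hnorm _).mp hcompl ▸ mem_univ ω
  exact this rfl

end Additive

section RelFreq

variable {Ω : Type*}

noncomputable def relFreq (C : Set Ω) (l : Finset Ω) : ℚ :=
  (C ∩ l).ncard / l.card

theorem relFreq_nonneg (C : Set Ω) (l : Finset Ω) : 0 ≤ relFreq C l := by
  unfold relFreq; positivity

theorem relFreq_mono {C D : Set Ω} (h : C ⊆ D) (l : Finset Ω) :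
    relFreq C l ≤ relFreq D l := by
  unfold relFreq
  gcongr
  exact l.finite_toSet.inter_of_right D

theorem relFreq_mul_div_relFreq_of_subset {C D : Set Ω} (h : C ⊆ D) (l : Finset Ω) :
    relFreq D l * (relFreq C l / relFreq D l) = relFreq C l :=
  mul_div_cancel_of_imp' fun hD =>
    le_antisymm (hD ▸ relFreq_mono h l) (relFreq_nonneg C l)

theorem eq_relFreq_of_algebraMap_mul_eq {K R : Type*} [Field K] [CharZero K] [DivisionRing R]
    [Algebra K R] {P : Set Ω → R}
    (hadd : ∀ A B : Set Ω, A ∩ B = ∅ → P (A ∪ B) = P A + P B)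
    (hnorm : ∀ A : Set Ω, P A = 1 ↔ A = univ) (hfair : ∀ ω τ : Ω, P {ω} = P {τ})
    {C : Set Ω} {l : Finset Ω} (hl : l.Nonempty) {x : K}
    (h : algebraMap K R x * P l = P (C ∩ l)) : x = relFreq C l := by
  have hcard : (l.card : K) ≠ 0 := Nat.cast_ne_zero.mpr hl.card_pos.ne'
  obtain ⟨ω, -⟩ := hl
  have hcount : ∀ s : Set Ω, s.Finite → P s = s.ncard * P {ω} := fun s hs => by
    rw [apply_finite_eq_ncard_nsmul hadd hfair hs ω, nsmul_eq_mul]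
  rw [hcount _ l.finite_toSet, hcount _ (l.finite_toSet.inter_of_right C), ncard_coe_finset,
    ← mul_assoc] at h
  have hmul : x * l.card = (C ∩ l).ncard := by
    apply (algebraMap K R).injective
    simpa using mul_right_cancel₀ (apply_singleton_ne_zero hadd hnorm ω) h
  rw [relFreq, Rat.cast_div, Rat.cast_natCast, Rat.cast_natCast, eq_div_iff hcard, hmul]

end RelFreq

theorem nap_fair_conditional_hyperrational_general
    {Ω R : Type*} [Field R] [Algebra ℝ R]
    (P : Set Ω → R) (φ : Set Ω → FinP Ω → ℝ)
    (J : (FinP Ω → ℝ) →ₐ[ℝ] R)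
    (nap2 : ∀ A : Set Ω, P A = 1 ↔ A = Set.univ)
    (nap3 : ∀ A B : Set Ω, A ∩ B = ∅ → P (A ∪ B) = P A + P B)
    (nap4a : ∀ (A : Set Ω) (l : FinP Ω),
      algebraMap ℝ R (φ A l) * P (l.1 : Set Ω) = P (A ∩ (l.1 : Set Ω)))
    (nap4b : ∀ A : Set Ω, P A = J (φ A))
    (fair : ∀ ω τ : Ω, P {ω} = P {τ}) :
    ∀ A B : Set Ω, B.Nonempty →
      ∃ ψ : FinP Ω → ℝ, (∀ l : FinP Ω, ∃ q : ℚ, ψ l = (q : ℝ)) ∧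
        P (A ∩ B) = P B * J ψ := by
  intro A B _
  have hφ : ∀ C l, φ C l = relFreq C l.1 := fun C l =>
    eq_relFreq_of_algebraMap_mul_eq nap3 nap2 fair l.2 (nap4a C l)
  let ψ : FinP Ω → ℝ := fun l => (relFreq (A ∩ B) l.1 / relFreq B l.1 : ℚ)
  have hfactor : φ (A ∩ B) = φ B * ψ := funext fun l => by
    simp only [Pi.mul_apply, hφ, ψ]
    exact_mod_cast (relFreq_mul_div_relFreq_of_subset inter_subset_right l.1).symm
  exact ⟨ψ, fun l => ⟨_, rfl⟩, by rw [nap4b, nap4b, hfactor, map_mul]⟩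

/-- In a fair NAP-space, every conditional probability `P(A|B)` with
`B` nonempty is the `J`-image of a rational-valued function: there is `ψ ∈ 𝔉` with
all values rational such that `P(A ∩ B) = P(B) · J(ψ)`. -/
theorem nap_fair_conditional_hyperrational
    {Ω R : Type*} [Nonempty Ω] [Field R] [LinearOrder R] [IsStrictOrderedRing R] [Algebra ℝ R]
    (P : Set Ω → R) (φ : Set Ω → FinP Ω → ℝ)
    (J : (FinP Ω → ℝ) →ₐ[ℝ] R)
    (nap1 : ∀ A : Set Ω, 0 ≤ P A)
    (nap2 : ∀ A : Set Ω, P A = 1 ↔ A = Set.univ)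
    (nap3 : ∀ A B : Set Ω, A ∩ B = ∅ → P (A ∪ B) = P A + P B)
    (nap4a : ∀ (A : Set Ω) (l : FinP Ω),
      algebraMap ℝ R (φ A l) * P (l.1 : Set Ω) = P (A ∩ (l.1 : Set Ω)))
    (nap4b : ∀ A : Set Ω, P A = J (φ A))
    (fair : ∀ ω τ : Ω, P {ω} = P {τ}) :
    ∀ A B : Set Ω, B.Nonempty →
      ∃ ψ : FinP Ω → ℝ, (∀ l : FinP Ω, ∃ q : ℚ, ψ l = (q : ℝ)) ∧
        P (A ∩ B) = P B * J ψ :=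
  nap_fair_conditional_hyperrational_general P φ J nap2 nap3 nap4a nap4b fair
end
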